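/- Let n, m ≥ 1, N = n(n+1)/2, and let B_1, ..., B_m be n×n real symmetric matrices. Let B ∈ M(N,m) be the coefficient matrix of (B_1,...,B_m) with respect to the standard orthonormal basis {Ê_α}_{α=1}^N of SM(n), i.e. B_r = Σ_{α=1}^N B_{αr} Ê_α. Suppose BBᵗ = Q diag(x_1,...,x_N) Qᵗ with Q = (q_{αβ}) ∈ SO(N) and x_α ≥ 0, and set Q̂_α = Σ_{β=1}^N q_{βα} Ê_β. Then Σ_{r,s=1}^m ‖[B_r, B_s]‖² = Σ_{α,β=1}^N x_α x_β ‖[Q̂_α, Q̂_β]‖², and Σ_{r=1}^m ‖B_r‖² = Σ_{α=1}^N x_α. -/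

import Mathlib

open Matrix BigOperators

/-- The squared Frobenius norm: sum of squares of the entries. -/
noncomputable def frobSq {n : ℕ} (A : Matrix (Fin n) (Fin n) ℝ) : ℝ :=
  ∑ i, ∑ j, (A i j) ^ 2

/-- The commutator of two matrices. -/
def mcomm {n : ℕ} (A B : Matrix (Fin n) (Fin n) ℝ) : Matrix (Fin n) (Fin n) ℝ :=
  A * B - B * A

/-- The standard orthonormal basis element `Ê_{ij}` of the space of symmetric matrices:
`Ê_{ii} = E_{ii}` and `Ê_{ij} = (E_{ij} + E_{ji})/√2` for `i ≠ j`. -/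
noncomputable def Ehat {n : ℕ} (i j : Fin n) : Matrix (Fin n) (Fin n) ℝ :=
  if i = j then Matrix.single i i (1 : ℝ)
  else (1 / Real.sqrt 2) •
    (Matrix.single i j (1 : ℝ) + Matrix.single j i (1 : ℝ))

/-! Expanded in the basis `Ê_α`, `∑_{r,s} w_r w_s ‖[∑_α C_{αr} Ê_α, ∑_β C_{βs} Ê_β]‖²` is a
quartic form in `C` in which the sums over `r` and `s` pair up into entries of the weighted Gram
matrix `C diag(w) Cᵗ`. With `C = B`, `w = 1` and with `C = Q`, `w = x`, both sides of the first
identity are therefore the same expression in `BBᵗ = Q diag(x) Qᵗ`. The second identity is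
orthonormality of the `Ê_α`: `∑_r ‖B_r‖² = tr(BBᵗ) = tr(diag x)`. -/

theorem mul_diagonal_mul_transpose_apply {ι κ : Type*} [Fintype κ] [DecidableEq κ]
    (C : Matrix ι κ ℝ) (w : κ → ℝ) (a b : ι) :
    (C * diagonal w * Cᵀ) a b = ∑ r, w r * C a r * C b r := by
  rw [mul_apply]
  simp only [mul_diagonal, transpose_apply, mul_comm (C a _)]

section

variable {n : ℕ} {ι κ : Type*} [Fintype ι] [Fintype κ]

noncomputable def frobInner : LinearMap.BilinForm ℝ (Matrix (Fin n) (Fin n) ℝ) :=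
  LinearMap.mk₂ ℝ (fun X Y => ∑ i, ∑ j, X i j * Y i j)
    (fun _ _ _ => by simp only [Matrix.add_apply, add_mul, Finset.sum_add_distrib])
    (fun _ _ _ => by simp only [Matrix.smul_apply, smul_eq_mul, mul_assoc, Finset.mul_sum])
    (fun _ _ _ => by simp only [Matrix.add_apply, mul_add, Finset.sum_add_distrib])
    (fun _ _ _ => by simp only [Matrix.smul_apply, smul_eq_mul, mul_left_comm, Finset.mul_sum])

theorem frobInner_apply (X Y : Matrix (Fin n) (Fin n) ℝ) :
    frobInner X Y = ∑ i, ∑ j, X i j * Y i j := rfl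

theorem frobSq_eq_frobInner (X : Matrix (Fin n) (Fin n) ℝ) : frobSq X = frobInner X X := by
  simp only [frobSq, frobInner_apply, sq]

theorem frobInner_single_left (a b : Fin n) (Y : Matrix (Fin n) (Fin n) ℝ) :
    frobInner (single a b 1) Y = Y a b := by
  simp [frobInner_apply, single_apply, ite_and, Finset.sum_ite_eq]

theorem frobInner_sum_smul_sum_smul (c : ι → ℝ) (d : κ → ℝ)
    (X : ι → Matrix (Fin n) (Fin n) ℝ) (Y : κ → Matrix (Fin n) (Fin n) ℝ) :
    frobInner (∑ p, c p • X p) (∑ q, d q • Y q) =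
      ∑ p, ∑ q, c p * d q * frobInner (X p) (Y q) := by
  simp only [map_sum, map_smul, LinearMap.sum_apply, LinearMap.smul_apply, smul_eq_mul,
    Finset.mul_sum, mul_assoc, mul_left_comm (d _)]
  exact Finset.sum_comm

theorem mcomm_sum_smul_sum_smul (u v : ι → ℝ) (E : ι → Matrix (Fin n) (Fin n) ℝ) :
    mcomm (∑ α, u α • E α) (∑ β, v β • E β) =
      ∑ p : ι × ι, (u p.1 * v p.2) • mcomm (E p.1) (E p.2) := by
  simp only [mcomm, Finset.sum_mul, Finset.mul_sum, smul_mul_smul_comm, Fintype.sum_prod_type,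
    smul_sub, Finset.sum_sub_distrib, mul_comm (u _)]
  congr 1
  exact Finset.sum_comm

theorem sum_mul_frobSq_mcomm_sum_smul [DecidableEq κ] (E : ι → Matrix (Fin n) (Fin n) ℝ)
    (C : Matrix ι κ ℝ) (w : κ → ℝ) :
    ∑ r, ∑ s, w r * w s * frobSq (mcomm (∑ α, C α r • E α) (∑ β, C β s • E β)) =
      ∑ p : ι × ι, ∑ q : ι × ι,
        (C * diagonal w * Cᵀ) p.1 q.1 * (C * diagonal w * Cᵀ) p.2 q.2 *
          frobInner (mcomm (E p.1) (E p.2)) (mcomm (E q.1) (E q.2)) := by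
  simp only [frobSq_eq_frobInner, mcomm_sum_smul_sum_smul, frobInner_sum_smul_sum_smul,
    mul_diagonal_mul_transpose_apply, Finset.sum_mul, Finset.mul_sum,
    Finset.sum_comm (γ := κ) (α := ι × ι)]
  refine Finset.sum_congr rfl fun _ _ => Finset.sum_congr rfl fun _ _ => ?_
  rw [Finset.sum_comm]
  exact Finset.sum_congr rfl fun _ _ => Finset.sum_congr rfl fun _ _ => by ring

variable [DecidableEq ι]

theorem frobSq_sum_smul_of_orthonormal {E : ι → Matrix (Fin n) (Fin n) ℝ}
    (hE : ∀ α β, frobInner (E α) (E β) = if α = β then 1 else 0) (c : ι → ℝ) :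
    frobSq (∑ α, c α • E α) = ∑ α, c α ^ 2 := by
  simp only [frobSq_eq_frobInner, frobInner_sum_smul_sum_smul, hE, mul_ite, mul_one, mul_zero,
    Finset.sum_ite_eq, Finset.mem_univ, if_true, sq]

theorem sum_frobSq_sum_smul_of_orthonormal {E : ι → Matrix (Fin n) (Fin n) ℝ}
    (hE : ∀ α β, frobInner (E α) (E β) = if α = β then 1 else 0) (C : Matrix ι κ ℝ) :
    ∑ r, frobSq (∑ α, C α r • E α) = trace (C * Cᵀ) := by
  simp only [frobSq_sum_smul_of_orthonormal hE, trace, diag, mul_apply, transpose_apply, sq]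
  exact Finset.sum_comm

end

section

variable {n : ℕ}

theorem Ehat_self (i : Fin n) : Ehat i i = single i i 1 := if_pos rfl

theorem Ehat_of_ne {i j : Fin n} (h : i ≠ j) :
    Ehat i j = (√2)⁻¹ • (single i j 1 + single j i 1) := by
  rw [Ehat, if_neg h, one_div]

theorem frobInner_Ehat_Ehat {i j k l : Fin n} (hij : i ≤ j) (hkl : k ≤ l) :
    frobInner (Ehat i j) (Ehat k l) = if i = k ∧ j = l then 1 else 0 := by
  have hsqrt : (√2)⁻¹ * (√2)⁻¹ * 2 = (1 : ℝ) := by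
    rw [← mul_inv, Real.mul_self_sqrt zero_le_two, inv_mul_cancel₀ two_ne_zero]
  rcases hij.eq_or_lt with rfl | hij <;> rcases hkl.eq_or_lt with rfl | hkl
  · simp only [Ehat_self, frobInner_single_left, single_apply]
    grind
  · simp only [Ehat_self, Ehat_of_ne hkl.ne, frobInner_single_left, Matrix.smul_apply,
      Matrix.add_apply, single_apply, smul_eq_mul]
    grind
  · simp only [Ehat_self, Ehat_of_ne hij.ne, map_smul, map_add, LinearMap.smul_apply,
      LinearMap.add_apply, frobInner_single_left, single_apply, smul_eq_mul]
    grind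
  · simp only [Ehat_of_ne hij.ne, Ehat_of_ne hkl.ne, map_smul, map_add, LinearMap.smul_apply,
      LinearMap.add_apply, frobInner_single_left, single_apply, smul_eq_mul]
    grind

end

theorem diagonalized_commutator_sums (n m : ℕ)
    (Bfam : Fin m → Matrix (Fin n) (Fin n) ℝ)
    (B : Matrix {p : Fin n × Fin n // p.1 ≤ p.2} (Fin m) ℝ)
    (hB : ∀ r, Bfam r = ∑ α : {p : Fin n × Fin n // p.1 ≤ p.2},
      B α r • Ehat α.1.1 α.1.2)
    (Q : Matrix {p : Fin n × Fin n // p.1 ≤ p.2} {p : Fin n × Fin n // p.1 ≤ p.2} ℝ)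
    (hQ : Q * Qᵀ = 1)
    (x : {p : Fin n × Fin n // p.1 ≤ p.2} → ℝ)
    (hBBt : B * Bᵀ = Q * Matrix.diagonal x * Qᵀ)
    (Qhat : {p : Fin n × Fin n // p.1 ≤ p.2} → Matrix (Fin n) (Fin n) ℝ)
    (hQhat : ∀ α, Qhat α = ∑ β : {p : Fin n × Fin n // p.1 ≤ p.2},
      Q β α • Ehat β.1.1 β.1.2) :
    (∑ r, ∑ s, frobSq (mcomm (Bfam r) (Bfam s)) =
      ∑ α, ∑ β, x α * x β * frobSq (mcomm (Qhat α) (Qhat β))) ∧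
    ∑ r, frobSq (Bfam r) = ∑ α, x α := by
  set E : {p : Fin n × Fin n // p.1 ≤ p.2} → Matrix (Fin n) (Fin n) ℝ :=
    fun α => Ehat α.1.1 α.1.2
  obtain rfl : Bfam = fun r => ∑ α, B α r • E α := funext hB
  obtain rfl : Qhat = fun α => ∑ β, Q β α • E β := funext hQhat
  constructor
  · have hBsum := sum_mul_frobSq_mcomm_sum_smul E B 1
    simp only [Pi.one_apply, one_mul, diagonal_one', Matrix.mul_one] at hBsum
    rw [hBsum, sum_mul_frobSq_mcomm_sum_smul E Q x, hBBt]
  · have hE (α β) : frobInner (E α) (E β) = if α = β then 1 else 0 := by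
      simp only [E, frobInner_Ehat_Ehat α.2 β.2, Subtype.ext_iff, Prod.ext_iff]
    rw [sum_frobSq_sum_smul_of_orthonormal hE, hBBt, trace_mul_cycle, mul_eq_one_comm.mp hQ,
      one_mul, trace_diagonal]
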